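/- For a finite field F with |F| ≥ 7, the longest induced path in the Jacobson graph of ℤ/2 ⊕ F has length 5 (i.e., 6 vertices), while the longest induced cycle has length 4; in particular the longest induced path is strictly longer than the longest induced cycle. -/

import Mathlib

/-!
Write the vertices as `(c, x)` with `c ∈ ℤ/2`. The vertices with `c = 1` form a clique, while a
vertex `(0, x)` is adjacent only to vertices with second coordinate `x⁻¹`, hence to at most one
vertex of each first coordinate. So along an induced path the vertices with `c = 1` are at most two
and consecutive, and no three consecutive vertices have `c = 0`: at most six vertices fit. On an
induced cycle of length at least five through some `(0, x)`, walking two steps from `(0, x)` in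
both directions reaches two non-consecutive vertices with `c = 1`, i.e. a chord. For `a, b` with
`a, a⁻¹, b, b⁻¹` distinct (possible once `|F| ≥ 6`) explicit examples attain both bounds.
-/

open scoped Classical

/-- The Jacobson graph of a commutative ring `R`. -/
def jacobsonGraph (R : Type*) [CommRing R] :
    SimpleGraph {x : R // x ∉ Ideal.jacobson (⊥ : Ideal R)} where
  Adj x y := x ≠ y ∧ ¬ IsUnit (1 - (x : R) * y)
  symm := ⟨by
    rintro x y ⟨h1, h2⟩
    exact ⟨h1.symm, by rwa [mul_comm] at h2⟩⟩
  loopless := ⟨fun x ⟨h, _⟩ => h rfl⟩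

/-- An induced (chordless) cycle in a simple graph. -/
def IsInducedCycle {V : Type*} {G : SimpleGraph V} {u : V} (p : G.Walk u u) : Prop :=
  p.IsCycle ∧ ∀ x ∈ p.support, ∀ y ∈ p.support, G.Adj x y → s(x, y) ∈ p.edges

/-- An induced (chordless) path in a simple graph. -/
def IsInducedPath {V : Type*} {G : SimpleGraph V} {u v : V} (p : G.Walk u v) : Prop :=
  p.IsPath ∧ ∀ x ∈ p.support, ∀ y ∈ p.support, G.Adj x y → s(x, y) ∈ p.edges

open SimpleGraph

section InducedWalks

variable {V : Type*} {G : SimpleGraph V}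

lemma SimpleGraph.Walk.IsCycle.eq_of_getVert_eq {u : V} {p : G.Walk u u} (hp : p.IsCycle)
    {a b : ℕ} (ha : a < p.length) (hb : b < p.length) (h : p.getVert a = p.getVert b) :
    a = b :=
  hp.getVert_injOn' (show a ≤ p.length - 1 by omega) (show b ≤ p.length - 1 by omega) h

lemma IsInducedPath.eq_add_one_of_adj_getVert {u v : V} {p : G.Walk u v}
    (hp : IsInducedPath p) {i j : ℕ} (hij : i < j) (hj : j ≤ p.length)
    (h : G.Adj (p.getVert i) (p.getVert j)) : j = i + 1 := by
  obtain ⟨k, hk, he⟩ := p.mk_mem_edges_iff_exists.1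
    (hp.2 _ (p.getVert_mem_support i) _ (p.getVert_mem_support j) h)
  have inj {a b : ℕ} (ha : a ≤ p.length) (hb : b ≤ p.length) (h : p.getVert a = p.getVert b) :
      a = b := hp.1.getVert_injOn ha hb h
  rcases Sym2.eq_iff.1 he with ⟨h₁, h₂⟩ | ⟨h₁, h₂⟩
  · have := inj (by omega) (by omega) h₁
    have := inj (by omega) hj h₂
    omega
  · have := inj (by omega) hj h₁
    have := inj (by omega) (by omega) h₂
    omega

lemma IsInducedCycle.eq_add_one_of_adj_getVert {u : V} {p : G.Walk u u}
    (hp : IsInducedCycle p) {i j : ℕ} (hij : i < j) (hj : j < p.length)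
    (h : G.Adj (p.getVert i) (p.getVert j)) : j = i + 1 ∨ (i = 0 ∧ j + 1 = p.length) := by
  obtain ⟨k, hk, he⟩ := p.mk_mem_edges_iff_exists.1
    (hp.2 _ (p.getVert_mem_support i) _ (p.getVert_mem_support j) h)
  rcases (show k + 1 ≤ p.length from hk).lt_or_eq with hk' | hk'
  · rcases Sym2.eq_iff.1 he with ⟨h₁, h₂⟩ | ⟨h₁, h₂⟩
    · have := hp.1.eq_of_getVert_eq hk (by omega) h₁
      have := hp.1.eq_of_getVert_eq hk' hj h₂
      omega
    · have := hp.1.eq_of_getVert_eq hk hj h₁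
      have := hp.1.eq_of_getVert_eq hk' (by omega) h₂
      omega
  · have hlast : p.getVert (k + 1) = p.getVert 0 := by
      rw [hk', Walk.getVert_length, Walk.getVert_zero]
    rw [hlast] at he
    rcases Sym2.eq_iff.1 he with ⟨h₁, h₂⟩ | ⟨h₁, h₂⟩
    · have := hp.1.eq_of_getVert_eq (by omega) hj h₂
      omega
    · have := hp.1.eq_of_getVert_eq hk hj h₁
      have := hp.1.eq_of_getVert_eq (by omega) (by omega) h₂
      omega

lemma IsInducedCycle.rotate [DecidableEq V] {u v : V} {p : G.Walk v v}
    (hp : IsInducedCycle p) (h : u ∈ p.support) : IsInducedCycle (p.rotate u h) := by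
  refine ⟨hp.1.rotate h, fun x hx y hy hxy => ?_⟩
  rw [Walk.mem_support_rotate_iff] at hx hy
  exact (p.rotate_edges u h).perm.mem_iff.2 (hp.2 x hx y hy hxy)

end InducedWalks

lemma le_five_of_compl_consecutive_of_no_three_consecutive {L : ℕ} (N : ℕ → Prop)
    (hC : ∀ i j, i < j → j ≤ L → ¬N i → ¬N j → j = i + 1)
    (hN : ∀ i, i + 2 ≤ L → N i → N (i + 1) → ¬N (i + 2)) : L ≤ 5 := by
  by_contra! hL
  obtain ⟨j, hj, hCj⟩ : ∃ j ≤ 2, ¬N j := by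
    by_contra! h
    exact hN 0 (by omega) (h 0 (by omega)) (h 1 (by omega)) (h 2 le_rfl)
  have hfar (t : ℕ) (ht : j + 2 ≤ t) (htL : t ≤ L) : N t := by
    by_contra hCt
    have := hC j t (by omega) htL hCj hCt
    omega
  exact hN (j + 2) (by omega) (hfar _ le_rfl (by omega)) (hfar _ (by omega) (by omega))
    (hfar _ (by omega) (by omega))

lemma notMem_jacobson_bot_iff {R : Type*} [CommRing R] [IsSemisimpleRing R] {x : R} :
    x ∉ Ideal.jacobson (⊥ : Ideal R) ↔ x ≠ 0 := by
  rw [Ideal.jacobson_bot, IsSemisimpleRing.jacobson_eq_bot, Ideal.mem_bot]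

section ProductOfFields

variable {K L : Type*} [Field K] [Field L]

lemma jacobsonGraph_prod_adj_iff
    {x y : {r : K × L // r ∉ Ideal.jacobson (⊥ : Ideal (K × L))}} :
    (jacobsonGraph (K × L)).Adj x y ↔ x ≠ y ∧ (x.1.1 * y.1.1 = 1 ∨ x.1.2 * y.1.2 = 1) := by
  change x ≠ y ∧ ¬IsUnit (1 - x.1 * y.1) ↔ _
  simp only [Prod.isUnit_iff, isUnit_iff_ne_zero, Prod.fst_sub, Prod.snd_sub, Prod.fst_mul,
    Prod.snd_mul, Prod.fst_one, Prod.snd_one, ne_eq, not_and_or, not_not, sub_eq_zero,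
    @eq_comm _ (1 : K), @eq_comm _ (1 : L)]

lemma jacobsonGraph_prod_adj_of_fst_eq_one
    {x y : {r : K × L // r ∉ Ideal.jacobson (⊥ : Ideal (K × L))}}
    (hx : x.1.1 = 1) (hy : y.1.1 = 1) (hxy : x ≠ y) : (jacobsonGraph (K × L)).Adj x y :=
  jacobsonGraph_prod_adj_iff.2 ⟨hxy, .inl (by rw [hx, hy, one_mul])⟩

lemma jacobsonGraph_prod_eq_of_adj_of_adj
    {x y z : {r : K × L // r ∉ Ideal.jacobson (⊥ : Ideal (K × L))}} (hx : x.1.1 = 0)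
    (hxy : (jacobsonGraph (K × L)).Adj x y) (hxz : (jacobsonGraph (K × L)).Adj x z)
    (hyz : y.1.1 = z.1.1) : y = z := by
  have snd_mul {w} (h : (jacobsonGraph (K × L)).Adj x w) : x.1.2 * w.1.2 = 1 := by
    simpa [hx] using (jacobsonGraph_prod_adj_iff.1 h).2
  have hy := snd_mul hxy
  exact Subtype.ext (Prod.ext hyz
    (mul_left_cancel₀ (left_ne_zero_of_mul_eq_one hy) (hy.trans (snd_mul hxz).symm)))

end ProductOfFields

lemma exists_pair_ne_inv_of_six_le_natCard {F : Type*} [Field F] [Finite F]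
    (hF : 6 ≤ Nat.card F) : ∃ a b : F, a ≠ 0 ∧ b ≠ 0 ∧ a ≠ a⁻¹ ∧ b ≠ b⁻¹ ∧ a ≠ b ∧ a ≠ b⁻¹ := by
  have avoid (s : Finset F) (hs : s.card ≤ 5) : ∃ x, x ∉ s :=
    s.exists_not_mem_of_card_lt_enatCard (by rw [ENat.card_eq_coe_natCard]; exact_mod_cast by omega)
  have ne_inv {x : F} (hx : x ≠ 0) (h₁ : x ≠ 1) (h₂ : x ≠ -1) : x ≠ x⁻¹ := by
    rw [ne_eq, ← mul_eq_one_iff_eq_inv₀ hx, mul_self_eq_one_iff]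
    tauto
  obtain ⟨a, ha⟩ := avoid {0, 1, -1} (Finset.card_le_three.trans (by norm_num))
  obtain ⟨b, hb⟩ := avoid {0, 1, -1, a, a⁻¹} Finset.card_le_five
  simp only [Finset.mem_insert, Finset.mem_singleton, not_or] at ha hb
  obtain ⟨ha₀, ha₁, ha₂⟩ := ha
  obtain ⟨hb₀, hb₁, hb₂, hba, hba'⟩ := hb
  exact ⟨a, b, ha₀, hb₀, ne_inv ha₀ ha₁ ha₂, ne_inv hb₀ hb₁ hb₂, Ne.symm hba,
    fun h => hba' (by rw [h, inv_inv])⟩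

section ZModTwoProd

variable {F : Type*} [Field F]

local notation "𝒱" => {r : ZMod 2 × F // r ∉ Ideal.jacobson (⊥ : Ideal (ZMod 2 × F))}

local notation "𝒥" => jacobsonGraph (ZMod 2 × F)

lemma jacobsonGraph_zmod2_adj_of_fst_ne_zero {x y : 𝒱} (hx : x.1.1 ≠ 0) (hy : y.1.1 ≠ 0)
    (hxy : x ≠ y) : (𝒥).Adj x y :=
  jacobsonGraph_prod_adj_of_fst_eq_one (Fin.eq_one_of_ne_zero _ hx) (Fin.eq_one_of_ne_zero _ hy)
    hxy

lemma jacobsonGraph_zmod2_fst_ne_zero_of_adj_of_adj {x y z : 𝒱} (hx : x.1.1 = 0)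
    (hyx : (𝒥).Adj y x) (hxz : (𝒥).Adj x z) (hy : y.1.1 = 0) (hyz : y ≠ z) : z.1.1 ≠ 0 :=
  fun hz => hyz (jacobsonGraph_prod_eq_of_adj_of_adj hx hyx.symm hxz (hy.trans hz.symm))

theorem jacobsonGraph_zmod2_isInducedPath_length_le_five {u v : 𝒱} {p : (𝒥).Walk u v}
    (hp : IsInducedPath p) : p.length ≤ 5 := by
  have ne {i j : ℕ} (hi : i ≤ p.length) (hj : j ≤ p.length) (hij : i ≠ j) :
      p.getVert i ≠ p.getVert j := fun h => hij (hp.1.getVert_injOn hi hj h)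
  refine le_five_of_compl_consecutive_of_no_three_consecutive (fun i => (p.getVert i).1.1 = 0)
    ?_ ?_
  · intro i j hij hj hi hj'
    exact hp.eq_add_one_of_adj_getVert hij hj
      (jacobsonGraph_zmod2_adj_of_fst_ne_zero hi hj' (ne (by omega) hj hij.ne))
  · intro i hi h₀ h₁
    exact jacobsonGraph_zmod2_fst_ne_zero_of_adj_of_adj h₁ (p.adj_getVert_succ (by omega))
      (p.adj_getVert_succ (by omega)) h₀ (ne (by omega) hi (by omega))

lemma jacobsonGraph_zmod2_isInducedCycle_length_le_four_of_fst_eq_zero {u : 𝒱}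
    {p : (𝒥).Walk u u} (hp : IsInducedCycle p) (hu : u.1.1 = 0) : p.length ≤ 4 := by
  by_contra! hL
  have adj {i : ℕ} (hi : i < p.length) : (𝒥).Adj (p.getVert i) (p.getVert (i + 1)) :=
    p.adj_getVert_succ hi
  have ne {i j : ℕ} (hi : i < p.length) (hj : j < p.length) (hij : i ≠ j) :
      p.getVert i ≠ p.getVert j :=
    fun h => hij (hp.1.eq_of_getVert_eq hi hj h)
  have ne_start {j : ℕ} (hj₀ : 0 < j) (hj : j < p.length) : u ≠ p.getVert j :=
    fun h => ne (i := 0) (by omega) hj (by omega) (p.getVert_zero.trans h)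
  have adj_first : (𝒥).Adj u (p.getVert 1) := by simpa using adj (i := 0) (by omega)
  have adj_last : (𝒥).Adj (p.getVert (p.length - 1)) u := by
    simpa [show p.length - 1 + 1 = p.length by omega] using adj (i := p.length - 1) (by omega)
  have adj_penultimate : (𝒥).Adj (p.getVert (p.length - 2)) (p.getVert (p.length - 1)) := by
    simpa [show p.length - 2 + 1 = p.length - 1 by omega] using adj (i := p.length - 2) (by omega)
  have no_chord {i j : ℕ} (hi : 1 ≤ i) (hij : i + 2 ≤ j) (hj : j < p.length)
      (hi' : (p.getVert i).1.1 ≠ 0) (hj' : (p.getVert j).1.1 ≠ 0) : False := by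
    have := hp.eq_add_one_of_adj_getVert (by omega) hj
      (jacobsonGraph_zmod2_adj_of_fst_ne_zero hi' hj' (ne (by omega) hj (by omega)))
    omega
  by_cases h₁ : (p.getVert 1).1.1 = 0
  · refine no_chord (i := 2) (j := p.length - 1) (by omega) (by omega) (by omega) ?_ ?_
    · exact jacobsonGraph_zmod2_fst_ne_zero_of_adj_of_adj h₁ adj_first (adj (by omega)) hu
        (ne_start (by omega) (by omega))
    · exact jacobsonGraph_zmod2_fst_ne_zero_of_adj_of_adj hu adj_first.symm adj_last.symm h₁
        (ne (by omega) (by omega) (by omega))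
  · by_cases hL₁ : (p.getVert (p.length - 1)).1.1 = 0
    · refine no_chord (i := 1) (j := p.length - 2) le_rfl (by omega) (by omega) h₁ ?_
      exact jacobsonGraph_zmod2_fst_ne_zero_of_adj_of_adj hL₁ adj_last.symm
        adj_penultimate.symm hu (ne_start (by omega) (by omega))
    · exact no_chord le_rfl (by omega) (by omega) h₁ hL₁

theorem jacobsonGraph_zmod2_isInducedCycle_length_le_four {u : 𝒱} {p : (𝒥).Walk u u}
    (hp : IsInducedCycle p) : p.length ≤ 4 := by
  by_cases hN : ∃ x ∈ p.support, x.1.1 = 0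
  · obtain ⟨x, hx, hx₀⟩ := hN
    simpa using jacobsonGraph_zmod2_isInducedCycle_length_le_four_of_fst_eq_zero
      (hp.rotate hx) hx₀
  · push Not at hN
    by_contra! hL
    have hC (i : ℕ) : (p.getVert i).1.1 ≠ 0 := hN _ (p.getVert_mem_support i)
    have := hp.eq_add_one_of_adj_getVert (i := 0) (j := 2) (by omega) (by omega)
      (jacobsonGraph_zmod2_adj_of_fst_ne_zero (hC 0) (hC 2)
        fun h => absurd (hp.1.eq_of_getVert_eq (by omega) (by omega) h) (by omega))
    omega

/-- The path `(0, a) – (0, a⁻¹) – (1, a) – (1, b) – (0, b⁻¹) – (0, b)`. -/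
lemma jacobsonGraph_zmod2_exists_isInducedPath_length_eq_five {a b : F} (ha : a ≠ 0)
    (hb : b ≠ 0) (haa : a ≠ a⁻¹) (hbb : b ≠ b⁻¹) (hab : a ≠ b) (hab' : a ≠ b⁻¹) :
    ∃ (u v : 𝒱) (p : (𝒥).Walk u v), IsInducedPath p ∧ p.length = 5 := by
  let n (x : F) (hx : x ≠ 0) : 𝒱 := ⟨(0, x), by simpa [notMem_jacobson_bot_iff]⟩
  let c (x : F) : 𝒱 := ⟨(1, x), by simp [notMem_jacobson_bot_iff]⟩
  have hab'' : a⁻¹ ≠ b := fun h => hab' (by rw [← h, inv_inv])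
  refine ⟨_, _, .cons (u := n a ha) (v := n a⁻¹ (inv_ne_zero ha)) ?_ <| .cons (v := c a) ?_ <|
    .cons (v := c b) ?_ <| .cons (v := n b⁻¹ (inv_ne_zero hb)) ?_ <| .cons (v := n b hb) ?_ .nil,
    ⟨?_, ?_⟩, ?_⟩
  all_goals simp [n, c, jacobsonGraph_prod_adj_iff, Walk.isPath_def, mul_eq_one_iff_eq_inv₀, ha,
    hb, haa, haa.symm, hbb, hbb.symm, hab, hab.symm, hab', hab'.symm, hab'', hab''.symm]

/-- The cycle `(1, a) – (0, a⁻¹) – (0, a) – (1, a⁻¹)`. -/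
lemma jacobsonGraph_zmod2_exists_isInducedCycle_length_eq_four {a : F} (ha : a ≠ 0)
    (haa : a ≠ a⁻¹) : ∃ (u : 𝒱) (p : (𝒥).Walk u u), IsInducedCycle p ∧ p.length = 4 := by
  let n (x : F) (hx : x ≠ 0) : 𝒱 := ⟨(0, x), by simpa [notMem_jacobson_bot_iff]⟩
  let c (x : F) : 𝒱 := ⟨(1, x), by simp [notMem_jacobson_bot_iff]⟩
  refine ⟨_, .cons (u := c a) (v := n a⁻¹ (inv_ne_zero ha)) ?_ <| .cons (v := n a ha) ?_ <|
    .cons (v := c a⁻¹) ?_ <| .cons ?_ .nil, ⟨?_, ?_⟩, ?_⟩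
  all_goals simp [n, c, jacobsonGraph_prod_adj_iff, Walk.cons_isCycle_iff, Walk.isPath_def,
    mul_eq_one_iff_eq_inv₀, ha, haa, haa.symm]

end ZModTwoProd

/-- For a finite field F with |F| ≥ 7, the longest induced path in the
Jacobson graph of ℤ/2 ⊕ F has length 5, while the longest induced cycle has length 4. -/
theorem jacobsonGraph_zmod2_field_longest_induced
    (F : Type*) [Field F] [Finite F] (hF : 7 ≤ Nat.card F) :
    (∃ (u v : {x : ZMod 2 × F // x ∉ Ideal.jacobson (⊥ : Ideal (ZMod 2 × F))})
      (p : (jacobsonGraph (ZMod 2 × F)).Walk u v), IsInducedPath p ∧ p.length = 5) ∧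
    (∀ (u v : {x : ZMod 2 × F // x ∉ Ideal.jacobson (⊥ : Ideal (ZMod 2 × F))})
      (p : (jacobsonGraph (ZMod 2 × F)).Walk u v), IsInducedPath p → p.length ≤ 5) ∧
    (∃ (u : {x : ZMod 2 × F // x ∉ Ideal.jacobson (⊥ : Ideal (ZMod 2 × F))})
      (p : (jacobsonGraph (ZMod 2 × F)).Walk u u), IsInducedCycle p ∧ p.length = 4) ∧
    (∀ (u : {x : ZMod 2 × F // x ∉ Ideal.jacobson (⊥ : Ideal (ZMod 2 × F))})
      (p : (jacobsonGraph (ZMod 2 × F)).Walk u u), IsInducedCycle p → p.length ≤ 4) := by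
  obtain ⟨a, b, ha, hb, haa, hbb, hab, hab'⟩ :=
    exists_pair_ne_inv_of_six_le_natCard (F := F) (by omega)
  exact ⟨jacobsonGraph_zmod2_exists_isInducedPath_length_eq_five ha hb haa hbb hab hab',
    fun _ _ _ => jacobsonGraph_zmod2_isInducedPath_length_le_five,
    jacobsonGraph_zmod2_exists_isInducedCycle_length_eq_four ha haa,
    fun _ _ => jacobsonGraph_zmod2_isInducedCycle_length_le_four⟩
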